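/- arXiv:1403.0523 — 5 statements merged into one kernel-verified Lean document; each statement's English description precedes it below -/
import Mathlib

section
/- Let A and B be bounded linear operators on a complex separable Hilbert space H such that both A and the product AB are normal. Then B commutes with AA* (i.e., B(AA*) = (AA*)B) if and only if BA is normal. -/
/-!
If `a` and `ab` are normal and `b` commutes with `aa*`, then `a` intertwines `ba` with `ab` and
`(ba)*` with `(ab)*`, so `a` annihilates the self-commutator `d = (ba)*(ba) - (ba)(ba)*`. Both
terms of `d` are left multiples of `a*`, say `d = a* x`, so `d² = (a d)* x = 0`, and `d = 0` by
the C*-identity.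
Conversely, if `ab` and `ba` are both normal, the Fuglede–Putnam theorem applied to
`a (ba) = (ab) a` gives `a (ba)* = (ab)* a`, i.e. `a a* b* = b* a* a`, whose adjoint is the claim.
-/

open ContinuousLinearMap

def IsNormalOp {H : Type*} [NormedAddCommGroup H] [InnerProductSpace ℂ H] [CompleteSpace H]
    (T : H →L[ℂ] H) : Prop :=
  T * adjoint T = adjoint T * T

section CStarRing

variable {E : Type*} [NonUnitalNormedRing E] [StarRing E] [CStarRing E]

theorem IsSelfAdjoint.eq_zero_of_mul_eq_zero_of_eq_star_mul {a d x : E} (hd : IsSelfAdjoint d)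
    (had : a * d = 0) (hdx : d = star a * x) : d = 0 := by
  rw [← CStarRing.star_mul_self_eq_zero_iff, hd.star_eq]
  calc d * d = star (a * d) * x := by
        nth_rw 2 [hdx]
        rw [star_mul, hd.star_eq, mul_assoc]
    _ = 0 := by rw [had, star_zero, zero_mul]

theorem IsStarNormal.mul_swap_of_commute_mul_star {a b : E} (ha : IsStarNormal a)
    (hab : IsStarNormal (a * b)) (h : Commute b (a * star a)) : IsStarNormal (b * a) := by
  have ha' : a * star a = star a * a := ha.star_comm_self.eq.symm
  have hstar : Commute (star b) (a * star a) := by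
    simpa only [star_mul, star_star] using h.star_star
  have h_adj : a * star (b * a) = star (a * b) * a := by
    rw [star_mul, star_mul, ← mul_assoc, ← hstar.eq, ha', mul_assoc]
  have h_ann : a * (star (b * a) * (b * a) - b * a * star (b * a)) = 0 := by
    rw [mul_sub, sub_eq_zero]
    calc a * (star (b * a) * (b * a)) = star (a * b) * (a * b) * a := by
          rw [← mul_assoc, h_adj]; noncomm_ring
      _ = a * b * star (a * b) * a := by rw [hab.star_comm_self.eq]
      _ = a * (b * a * star (b * a)) := by rw [mul_assoc _ _ a, ← h_adj]; noncomm_ring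
  have h_range : star (b * a) * (b * a) - b * a * star (b * a)
      = star a * (star b * b * a - a * b * star b) := by
    have : b * a * star (b * a) = star a * a * b * star b := by
      rw [star_mul, ← ha', ← h.eq]; noncomm_ring
    rw [this, star_mul]; noncomm_ring
  have hd : IsSelfAdjoint (star (b * a) * (b * a) - b * a * star (b * a)) :=
    (IsSelfAdjoint.star_mul_self _).sub (IsSelfAdjoint.mul_star_self _)
  rw [isStarNormal_iff, commute_iff_eq, ← sub_eq_zero]
  exact hd.eq_zero_of_mul_eq_zero_of_eq_star_mul h_ann h_range

end CStarRing

theorem IsStarNormal.commute_mul_star_of_mul_swap {E : Type*} [NonUnitalCStarAlgebra E] {a b : E}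
    (ha : IsStarNormal a) (hab : IsStarNormal (a * b)) (hba : IsStarNormal (b * a)) :
    Commute b (a * star a) := by
  have h : SemiconjBy a (b * a) (a * b) := (mul_assoc a b a).symm
  have h_adj : a * star (b * a) = star (a * b) * a := (h.star_right hba hab).eq
  have h_adj_star := congrArg star h_adj
  simp only [star_mul, star_star] at h_adj_star
  calc b * (a * star a) = star a * a * b := by rw [← mul_assoc, h_adj_star, mul_assoc]
    _ = a * star a * b := by rw [ha.star_comm_self.eq]

theorem IsStarNormal.commute_mul_star_iff {E : Type*} [NonUnitalCStarAlgebra E] {a b : E}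
    (ha : IsStarNormal a) (hab : IsStarNormal (a * b)) :
    Commute b (a * star a) ↔ IsStarNormal (b * a) :=
  ⟨ha.mul_swap_of_commute_mul_star hab, ha.commute_mul_star_of_mul_swap hab⟩

theorem isNormalOp_iff_isStarNormal {H : Type*} [NormedAddCommGroup H] [InnerProductSpace ℂ H]
    [CompleteSpace H] (T : H →L[ℂ] H) : IsNormalOp T ↔ IsStarNormal T := by
  rw [isStarNormal_iff, commute_iff_eq, star_eq_adjoint, IsNormalOp, eq_comm]

theorem kaplansky_bounded_general {H : Type*} [NormedAddCommGroup H] [InnerProductSpace ℂ H]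
    [CompleteSpace H]
    (A B : H →L[ℂ] H) (hA : IsNormalOp A) (hAB : IsNormalOp (A * B)) :
    B * (A * adjoint A) = (A * adjoint A) * B ↔ IsNormalOp (B * A) := by
  rw [isNormalOp_iff_isStarNormal] at hA hAB ⊢
  rw [← star_eq_adjoint]
  exact hA.commute_mul_star_iff hAB

/-- **Kaplansky's theorem** (bounded case): if `A` and `AB` are normal, then
`B` commutes with `AA*` if and only if `BA` is normal. -/
theorem kaplansky_bounded {H : Type*} [NormedAddCommGroup H] [InnerProductSpace ℂ H]
    [CompleteSpace H] [TopologicalSpace.SeparableSpace H]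
    (A B : H →L[ℂ] H) (hA : IsNormalOp A) (hAB : IsNormalOp (A * B)) :
    B * (A * adjoint A) = (A * adjoint A) * B ↔ IsNormalOp (B * A) :=
  kaplansky_bounded_general A B hA hAB
end

section
/- Let A and B be bounded linear operators on a complex separable Hilbert space H such that A is normal and AB is hyponormal. If AA*B = BAA*, then BA is hyponormal. -/
/-!
Let `|A| = √(A* A)`. Normality gives `‖A x‖ = ‖A* x‖ = ‖|A| x‖`, and `|A|` commutes with `B` and
`B*` because `A* A = A A*` does. Hence `‖(BA)* x‖ = ‖|A| B* x‖ = ‖B* |A| x‖`, and it remains to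
show `‖B* |A| x‖ ≤ ‖B A x‖`. For `x = |A| w` this is the hyponormality of `AB` at `A w`, since
`|A|² = A* A` and `|A|` commutes with `A`. Both sides vanish on `ker |A| = ker A`, and the range
of `|A|` is dense in the orthogonal complement of that kernel.
-/

open ContinuousLinearMap

def IsHyponormalOp {H : Type*} [NormedAddCommGroup H] [InnerProductSpace ℂ H] [CompleteSpace H]
    (T : H →L[ℂ] H) : Prop :=
  ∀ x : H, ‖adjoint T x‖ ≤ ‖T x‖

lemma CFC.commute_abs_of_commute_star_mul_self {A : Type*} [NonUnitalRing A] [StarRing A]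
    [TopologicalSpace A] [Module ℝ A] [SMulCommClass ℝ A A] [IsScalarTower ℝ A A]
    [NonUnitalContinuousFunctionalCalculus ℝ A IsSelfAdjoint]
    [PartialOrder A] [StarOrderedRing A] [NonnegSpectrumClass ℝ A] [IsTopologicalRing A]
    [T2Space A] {a b : A} (h : Commute (star a * a) b) : Commute (CFC.abs a) b :=
  h.cfcₙ_nnreal _

namespace ContinuousLinearMap

section Adjoint

variable {𝕜 E F G : Type*} [RCLike 𝕜]
  [NormedAddCommGroup E] [InnerProductSpace 𝕜 E] [CompleteSpace E]
  [NormedAddCommGroup F] [InnerProductSpace 𝕜 F] [CompleteSpace F]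

lemma norm_apply_eq_of_adjoint_comp_self_eq {X Y : E →L[𝕜] F}
    (h : adjoint X ∘L X = adjoint Y ∘L Y) (x : E) : ‖X x‖ = ‖Y x‖ := by
  rw [apply_norm_eq_sqrt_inner_adjoint_left, apply_norm_eq_sqrt_inner_adjoint_left, h]

lemma norm_apply_le_of_le_on_range_adjoint [NormedAddCommGroup G] [NormedSpace 𝕜 G]
    {T : E →L[𝕜] F} {f g : E →L[𝕜] G} (hf : T.ker ≤ f.ker) (hg : T.ker ≤ g.ker)
    (h : ∀ w, ‖f (adjoint T w)‖ ≤ ‖g (adjoint T w)‖) (x : E) : ‖f x‖ ≤ ‖g x‖ := by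
  have : CompleteSpace T.ker := (isClosed_ker T).completeSpace_coe
  obtain ⟨u, hu, v, hv, rfl⟩ := T.ker.exists_add_mem_mem_orthogonal x
  have hv : v ∈ closure (Set.range (adjoint T)) := by
    rwa [orthogonal_ker] at hv
  have hclosed : IsClosed {z | ‖f z‖ ≤ ‖g z‖} := isClosed_le (by fun_prop) (by fun_prop)
  have hle : ‖f v‖ ≤ ‖g v‖ := closure_minimal (by rintro _ ⟨w, rfl⟩; exact h w) hclosed hv
  have hfu : f u = 0 := hf hu
  have hgu : g u = 0 := hg hu
  simpa [hfu, hgu] using hle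

end Adjoint

variable {H : Type*} [NormedAddCommGroup H] [InnerProductSpace ℂ H] [CompleteSpace H]

lemma norm_abs_apply (T : H →L[ℂ] H) (x : H) : ‖CFC.abs T x‖ = ‖T x‖ := by
  refine norm_apply_eq_of_adjoint_comp_self_eq ?_ x
  rw [← star_eq_adjoint, (CFC.abs_nonneg T).isSelfAdjoint.star_eq, ← mul_def, CFC.abs_mul_abs,
    star_eq_adjoint, mul_def]

lemma abs_apply_comm {T X : H →L[ℂ] H} (h : Commute (star T * T) X) (x : H) :
    CFC.abs T (X x) = X (CFC.abs T x) :=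
  congr($((CFC.commute_abs_of_commute_star_mul_self h).eq) x)

lemma norm_adjoint_abs_apply_le {A B : H →L[ℂ] H} [IsStarNormal A]
    (hAB : IsHyponormalOp (A * B)) (hB : Commute (star A * A) B) (x : H) :
    ‖adjoint B (CFC.abs A x)‖ ≤ ‖B (A x)‖ := by
  set S := CFC.abs A
  have hS_adj : adjoint S = S := by rw [← star_eq_adjoint, (CFC.abs_nonneg A).isSelfAdjoint.star_eq]
  have hSS (v : H) : S (S v) = adjoint A (A v) := congr($(CFC.abs_mul_abs A) v)
  have hSA (v : H) : S (A v) = A (S v) := congr($((CFC.commute_abs_self A).eq) v)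
  have hSB : ∀ v, S (B v) = B (S v) := abs_apply_comm hB
  have hS_norm : ∀ v, ‖S v‖ = ‖A v‖ := norm_abs_apply A
  clear_value S
  refine norm_apply_le_of_le_on_range_adjoint (T := S) (f := adjoint B ∘L S) (g := B ∘L A)
    (fun v hv => by simp_all) (fun v hv => ?_) (fun w => ?_) x
  · have hSv : S v = 0 := hv
    have hAv : A v = 0 := norm_eq_zero.mp (by rw [← hS_norm, hSv, norm_zero])
    simp [hAv]
  · rw [hS_adj]
    calc ‖adjoint B (S (S w))‖ = ‖adjoint (A * B) (A w)‖ := by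
          rw [hSS]; exact congr(‖$(adjoint_comp A B) (A w)‖).symm
      _ ≤ ‖(A * B) (A w)‖ := hAB _
      _ = ‖S (B (A w))‖ := (hS_norm _).symm
      _ = ‖B (A (S w))‖ := by rw [hSB, hSA]

end ContinuousLinearMap

theorem hyponormal_of_commute_general {H : Type*} [NormedAddCommGroup H] [InnerProductSpace ℂ H]
    [CompleteSpace H]
    (A B : H →L[ℂ] H) (hA : IsNormalOp A) (hAB : IsHyponormalOp (A * B))
    (h : A * adjoint A * B = B * (A * adjoint A)) : IsHyponormalOp (B * A) := by
  have hA' : IsStarNormal A := ⟨hA.symm⟩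
  have hB : Commute (star A * A) B := by rw [star_eq_adjoint, ← hA]; exact h
  have hB' : Commute (star A * A) (adjoint B) := by
    simpa only [star_mul, star_star, star_eq_adjoint, adjoint_adjoint] using hB.star_star
  intro x
  calc ‖adjoint (B * A) x‖ = ‖A (adjoint B x)‖ := by
        rw [isStarNormal_iff_norm_eq_adjoint.mp hA']; exact congr(‖$(adjoint_comp B A) x‖)
    _ = ‖CFC.abs A (adjoint B x)‖ := (norm_abs_apply A _).symm
    _ = ‖adjoint B (CFC.abs A x)‖ := by rw [abs_apply_comm hB']
    _ ≤ ‖(B * A) x‖ := norm_adjoint_abs_apply_le hAB hB x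

/-- If `A` is normal, `AB` is hyponormal and `A A* B = B A A*`, then `BA` is hyponormal. -/
theorem hyponormal_of_commute {H : Type*} [NormedAddCommGroup H] [InnerProductSpace ℂ H]
    [CompleteSpace H] [TopologicalSpace.SeparableSpace H]
    (A B : H →L[ℂ] H) (hA : IsNormalOp A) (hAB : IsHyponormalOp (A * B))
    (h : A * adjoint A * B = B * (A * adjoint A)) : IsHyponormalOp (B * A) :=
  hyponormal_of_commute_general A B hA hAB h
end

section
/- Let A and B be bounded linear operators on a complex separable Hilbert space H such that A is normal and AB is co-hyponormal. If AA*B = BAA*, then BA is co-hyponormal. -/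
open ContinuousLinearMap

/-- A bounded operator `T` on a Hilbert space is *co-hyponormal* if its adjoint is
hyponormal, i.e. `‖T x‖ ≤ ‖T* x‖` for all `x`. -/
def IsCoHyponormalOp {H : Type*} [NormedAddCommGroup H] [InnerProductSpace ℂ H] [CompleteSpace H]
    (T : H →L[ℂ] H) : Prop :=
  ∀ x : H, ‖T x‖ ≤ ‖adjoint T x‖

/-!
Let `S = |A| = √(A* A)`. Normality of `A` gives `‖A x‖ = ‖S x‖ = ‖A* x‖`, and since `A A* = A* A`
is self-adjoint and commutes with `B`, both `B` and `B*` commute with its square root `S`.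
Evaluating at `x = S u` therefore turns the co-hyponormality of `AB` at `A u` into that of `BA`
at `S u`. Both sides of the desired inequality vanish on `ker S`, and `ker S + range S` is dense,
so the inequality extends to all of `H` by continuity.
-/

namespace ContinuousLinearMap

section

variable {𝕜 D E F G : Type*} [RCLike 𝕜]
  [NormedAddCommGroup D] [InnerProductSpace 𝕜 D] [CompleteSpace D]
  [NormedAddCommGroup E] [InnerProductSpace 𝕜 E] [CompleteSpace E]
  [NormedAddCommGroup F] [NormedSpace 𝕜 F] [NormedAddCommGroup G] [NormedSpace 𝕜 G]

theorem norm_apply_le_of_forall_range (S : D →L[𝕜] E) {T : E →L[𝕜] F} {R : E →L[𝕜] G}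
    (hT : (adjoint S).ker ≤ T.ker) (hR : (adjoint S).ker ≤ R.ker)
    (h : ∀ u, ‖T (S u)‖ ≤ ‖R (S u)‖) (x : E) :
    ‖T x‖ ≤ ‖R x‖ := by
  have hdense : Dense (((adjoint S).ker ⊔ S.range : Submodule 𝕜 E) : Set E) := by
    rw [Submodule.dense_iff_topologicalClosure_eq_top, Submodule.topologicalClosure_eq_top_iff,
      ← Submodule.inf_orthogonal, S.orthogonal_range, inf_comm, Submodule.inf_orthogonal_eq_bot]
  have hsub : (((adjoint S).ker ⊔ S.range : Submodule 𝕜 E) : Set E) ⊆ {x | ‖T x‖ ≤ ‖R x‖} := by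
    rintro _ hx
    obtain ⟨k, hk, _, ⟨u, rfl⟩, rfl⟩ := Submodule.mem_sup.mp hx
    have hTk : T k = 0 := hT hk
    have hRk : R k = 0 := hR hk
    simpa [hTk, hRk] using h u
  exact (isClosed_le T.continuous.norm R.continuous.norm).closure_subset_iff.mpr hsub
    (hdense.closure_eq ▸ Set.mem_univ x)

theorem adjoint_mul (T U : E →L[𝕜] E) : adjoint (T * U) = adjoint U * adjoint T :=
  adjoint_comp T U

end

variable {E : Type*} [NormedAddCommGroup E] [InnerProductSpace ℂ E] [CompleteSpace E]

theorem norm_cfcAbs_apply (T : E →L[ℂ] E) (x : E) : ‖CFC.abs T x‖ = ‖T x‖ := by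
  have h : adjoint (CFC.abs T) ∘L CFC.abs T = adjoint T ∘L T := by
    rw [(CFC.abs_nonneg T).isSelfAdjoint.adjoint_eq, ← star_eq_adjoint]
    exact CFC.abs_mul_abs T
  rw [apply_norm_eq_sqrt_inner_adjoint_left, h, ← apply_norm_eq_sqrt_inner_adjoint_left]

theorem ker_cfcAbs (T : E →L[ℂ] E) : (CFC.abs T).ker = T.ker := by
  ext x
  simp only [LinearMap.mem_ker, coe_coe]
  rw [← norm_eq_zero, norm_cfcAbs_apply, norm_eq_zero]

variable {A B : E →L[ℂ] E}

theorem commute_cfcAbs_adjoint (hB : Commute (star A * A) B) : Commute (CFC.abs A) (adjoint B) := by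
  rw [← star_eq_adjoint]
  refine Commute.cfcₙ_nnreal (commute_star_comm.mp ?_) _
  rwa [(IsSelfAdjoint.star_mul_self A).star_eq]

theorem IsStarNormal.norm_adjoint_mul_apply (hA : IsStarNormal A)
    (hB : Commute (star A * A) B) (x : E) : ‖adjoint (B * A) x‖ = ‖adjoint B (CFC.abs A x)‖ := by
  rw [adjoint_mul, mul_apply_eq_comp, ← isStarNormal_iff_norm_eq_adjoint.mp hA,
    ← norm_cfcAbs_apply A, ← mul_apply_eq_comp (CFC.abs A), (commute_cfcAbs_adjoint hB).eq,
    mul_apply_eq_comp]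

theorem IsStarNormal.norm_mul_cfcAbs_apply_le (hA : IsStarNormal A)
    (hB : Commute (star A * A) B) (hAB : IsCoHyponormalOp (A * B)) (u : E) :
    ‖(B * A) (CFC.abs A u)‖ ≤ ‖adjoint (B * A) (CFC.abs A u)‖ := by
  set S := CFC.abs A
  have hSS : S * S = adjoint A * A := by rw [← star_eq_adjoint]; exact CFC.abs_mul_abs A
  have hSBA : Commute S (B * A) := (hB.cfcₙ_nnreal _).mul_right (CFC.commute_abs_self A)
  calc ‖(B * A) (S u)‖ = ‖S ((B * A) u)‖ := by
        rw [← mul_apply_eq_comp (B * A), ← hSBA.eq, mul_apply_eq_comp]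
    _ = ‖(A * B) (A u)‖ := norm_cfcAbs_apply A _
    _ ≤ ‖adjoint (A * B) (A u)‖ := hAB _
    _ = ‖adjoint B ((S * S) u)‖ := by rw [adjoint_mul, hSS]; rfl
    _ = ‖adjoint (B * A) (S u)‖ := by rw [hA.norm_adjoint_mul_apply hB, mul_apply_eq_comp]

end ContinuousLinearMap

theorem cohyponormal_of_commute_general {H : Type*} [NormedAddCommGroup H] [InnerProductSpace ℂ H]
    [CompleteSpace H]
    (A B : H →L[ℂ] H) (hA : IsNormalOp A) (hAB : IsCoHyponormalOp (A * B))
    (h : A * adjoint A * B = B * (A * adjoint A)) : IsCoHyponormalOp (B * A) := by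
  have hA' : IsStarNormal A := ⟨by rw [star_eq_adjoint]; exact hA.symm⟩
  have hB : Commute (star A * A) B := by rw [hA'.star_comm_self.eq, star_eq_adjoint]; exact h
  have hS : adjoint (CFC.abs A) = CFC.abs A := (CFC.abs_nonneg A).isSelfAdjoint.adjoint_eq
  refine norm_apply_le_of_forall_range (CFC.abs A) ?_ ?_ (hA'.norm_mul_cfcAbs_apply_le hB hAB)
  · rw [hS, ker_cfcAbs]
    exact LinearMap.ker_le_ker_comp _ _
  · intro x (hx : adjoint (CFC.abs A) x = 0)
    rw [hS] at hx
    rw [LinearMap.mem_ker, coe_coe, ← norm_eq_zero, hA'.norm_adjoint_mul_apply hB, hx, map_zero,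
      norm_zero]

/-- If `A` is normal, `AB` is co-hyponormal and `A A* B = B A A*`, then `BA` is
co-hyponormal. -/
theorem cohyponormal_of_commute {H : Type*} [NormedAddCommGroup H] [InnerProductSpace ℂ H]
    [CompleteSpace H] [TopologicalSpace.SeparableSpace H]
    (A B : H →L[ℂ] H) (hA : IsNormalOp A) (hAB : IsCoHyponormalOp (A * B))
    (h : A * adjoint A * B = B * (A * adjoint A)) : IsCoHyponormalOp (B * A) :=
  cohyponormal_of_commute_general A B hA hAB h
end

section
/- Let A and B be bounded linear operators on a complex separable Hilbert space H such that A is normal, AB is hyponormal, and BA is co-hyponormal. If AA*B = BA*A, then both AB and BA are normal. -/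
/-!
Put `p = a⋆a = aa⋆`; the hypothesis says that `p` commutes with `b`, hence with `b⋆`, `a`, `a⋆`.
The self-commutators `d = (ab)⋆(ab) - (ab)(ab)⋆` and `e = (ba)(ba)⋆ - (ba)⋆(ba)` are nonnegative,
and a direct computation gives `a⋆ d a + e p = 0`. Both summands are nonnegative (`e p` because
`e` and `p` commute), so `a⋆ d a = 0` and `e p = 0`, i.e. `d a = 0` and `e a⋆ = 0`. Then
`d² = d p b⋆b = d a a⋆ b⋆b = 0`, so the self-adjoint `d` vanishes; `e` is the self-commutator of
`a⋆b⋆` and vanishes by the same argument. This is pure C⋆-algebra: for an operator `T`,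
hyponormality is the Loewner inequality `T T⋆ ≤ T⋆ T`.
-/

open ContinuousLinearMap

lemma CStarRing.mul_star_eq_zero_of_mul_star_mul_self_eq_zero {E : Type*} [NonUnitalNormedRing E]
    [StarRing E] [CStarRing E] {e c : E} (he : IsSelfAdjoint e)
    (h : e * (star c * c) = 0) : e * star c = 0 := by
  rw [← CStarRing.mul_star_self_eq_zero_iff, star_mul, star_star, he.star_eq, mul_assoc,
    ← mul_assoc (star c), ← mul_assoc, h, zero_mul]

lemma IsSelfAdjoint.commute_star_right {R : Type*} [Mul R] [StarMul R] {p b : R}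
    (hp : IsSelfAdjoint p) (h : Commute p b) : Commute p (star b) := by
  simpa only [hp.star_eq] using h.star_star

lemma IsSelfAdjoint.eq_zero_of_mul_self_eq_zero {E : Type*} [NonUnitalNormedRing E]
    [StarRing E] [CStarRing E] {d : E} (hd : IsSelfAdjoint d) (h : d * d = 0) : d = 0 := by
  rwa [← CStarRing.star_mul_self_eq_zero_iff, hd.star_eq]

namespace CStarAlgebra

variable {A : Type*} [CStarAlgebra A]

lemma mul_eq_zero_of_star_left_conjugate_eq_zero [PartialOrder A] [StarOrderedRing A] {d a : A}
    (hd : 0 ≤ d) (h : star a * d * a = 0) : d * a = 0 := by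
  have hsa : IsSelfAdjoint (CFC.sqrt d) := (CFC.sqrt_nonneg d).isSelfAdjoint
  have : CFC.sqrt d * a = 0 := by
    rw [← CStarRing.star_mul_self_eq_zero_iff, star_mul, hsa.star_eq, mul_assoc,
      ← mul_assoc (CFC.sqrt d), CFC.sqrt_mul_sqrt_self d hd, ← mul_assoc, h]
  rw [← CFC.sqrt_mul_sqrt_self d hd, mul_assoc, this, mul_zero]

lemma isStarNormal_mul_of_selfCommutator_mul_eq_zero {a b : A} [ha : IsStarNormal a]
    (hb : Commute (star a * a) b)
    (h : (star (a * b) * (a * b) - a * b * star (a * b)) * a = 0) : IsStarNormal (a * b) := by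
  set d := star (a * b) * (a * b) - a * b * star (a * b)
  have hp : IsSelfAdjoint (star a * a) := .star_mul_self a
  have hdp : d * (star a * a) = 0 := by
    rw [ha.star_comm_self, ← mul_assoc, h, zero_mul]
  have hd_eq : d = star b * b * (star a * a) - a * (b * star (a * b)) := by
    rw [mul_assoc, ← hb.eq]
    simp only [d, star_mul, mul_assoc]
  have hdd : d * d = 0 := calc
    d * d = d * (star a * a * (star b * b)) - d * a * (b * star (a * b)) := by
      nth_rewrite 2 [hd_eq]
      rw [mul_sub, ← ((hp.commute_star_right hb).mul_right hb).eq, mul_assoc d a]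
    _ = 0 := by rw [h, ← mul_assoc, hdp, zero_mul, zero_mul, sub_zero]
  have hd : IsSelfAdjoint d := by
    simp only [d, IsSelfAdjoint, star_sub, star_mul, star_star, mul_assoc]
  rw [isStarNormal_iff, commute_iff_eq, ← sub_eq_zero]
  exact hd.eq_zero_of_mul_self_eq_zero hdd

theorem isStarNormal_mul_and_mul_of_hyponormal {a b : A} [PartialOrder A] [StarOrderedRing A]
    [ha : IsStarNormal a] (hab : a * b * star (a * b) ≤ star (a * b) * (a * b))
    (hba : star (b * a) * (b * a) ≤ b * a * star (b * a))
    (h : a * star a * b = b * (star a * a)) : IsStarNormal (a * b) ∧ IsStarNormal (b * a) := by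
  have hp : IsSelfAdjoint (star a * a) := .star_mul_self a
  have hpa : Commute (star a * a) a := ha.star_comm_self.mul_left (.refl a)
  have hpb : Commute (star a * a) b := (congrArg (· * b) (star_comm_self' a)).trans h
  have hpba : Commute (star a * a) (b * a) := hpb.mul_right hpa
  set d := star (a * b) * (a * b) - a * b * star (a * b)
  set e := b * a * star (b * a) - star (b * a) * (b * a)
  have hd : 0 ≤ d := sub_nonneg.2 hab
  have he : 0 ≤ e := sub_nonneg.2 hba
  have hkey : star a * d * a + e * (star a * a) = 0 := by
    have h₁ : star a * (star (a * b) * (a * b)) * a = star (b * a) * (b * a) * (star a * a) := by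
      have := hpba.eq
      simp only [star_mul, mul_assoc] at this ⊢
      rw [this]
    have h₂ : star a * (a * b * star (a * b)) * a = b * a * star (b * a) * (star a * a) := calc
      _ = star a * a * b * star b * (star a * a) := by simp only [star_mul, mul_assoc]
      _ = b * (a * star a) * star b * (star a * a) := by rw [hpb.eq, star_comm_self' a]
      _ = _ := by simp only [star_mul, mul_assoc]
    rw [mul_sub, sub_mul, h₁, h₂, sub_mul]
    abel
  have hep : Commute e (star a * a) := by
    have hpba' := hp.commute_star_right hpba
    exact ((hpba.mul_right hpba').sub_right (hpba'.mul_right hpba)).symm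
  obtain ⟨hdaa, hepp⟩ := (add_eq_zero_iff_of_nonneg (star_left_conjugate_nonneg hd a)
    (hep.mul_nonneg he (star_mul_self_nonneg a))).1 hkey
  refine ⟨isStarNormal_mul_of_selfCommutator_mul_eq_zero hpb
    (mul_eq_zero_of_star_left_conjugate_eq_zero hd hdaa), ?_⟩
  have : IsStarNormal (star a * star b) := by
    refine isStarNormal_mul_of_selfCommutator_mul_eq_zero ?_ ?_
    · rw [star_star, ← star_comm_self' a]
      exact hp.commute_star_right hpb
    · have := CStarRing.mul_star_eq_zero_of_mul_star_mul_self_eq_zero he.isSelfAdjoint hepp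
      simpa only [e, star_mul, star_star] using this
  simpa only [star_mul, star_star] using IsStarNormal.star (x := star a * star b)

end CStarAlgebra

namespace ContinuousLinearMap

variable {𝕜 E : Type*} [RCLike 𝕜] [NormedAddCommGroup E] [InnerProductSpace 𝕜 E] [CompleteSpace E]

theorem star_mul_self_le_star_mul_self_iff {S T : E →L[𝕜] E} :
    star S * S ≤ star T * T ↔ ∀ x, ‖S x‖ ≤ ‖T x‖ := by
  have hsa : IsSelfAdjoint (star T * T - star S * S) :=
    (IsSelfAdjoint.star_mul_self T).sub (.star_mul_self S)
  have hre (x : E) : (star T * T - star S * S).reApplyInnerSelf x = ‖T x‖ ^ 2 - ‖S x‖ ^ 2 := by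
    simp only [reApplyInnerSelf_apply, sub_apply, inner_sub_left, map_sub, star_eq_adjoint,
      apply_norm_sq_eq_inner_adjoint_left]
    rfl
  simp only [le_def, isPositive_def', hsa, true_and, hre, sub_nonneg]
  exact forall_congr' fun x ↦ pow_le_pow_iff_left₀ (norm_nonneg _) (norm_nonneg _) two_ne_zero

end ContinuousLinearMap

section

variable {H : Type*} [NormedAddCommGroup H] [InnerProductSpace ℂ H] [CompleteSpace H]
  {T : H →L[ℂ] H}

theorem isNormalOp_iff_isStarNormal_s7 : IsNormalOp T ↔ IsStarNormal T := by
  rw [IsNormalOp, ← star_eq_adjoint, isStarNormal_iff, commute_iff_eq, eq_comm]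

theorem isHyponormalOp_iff_le : IsHyponormalOp T ↔ T * star T ≤ star T * T := by
  rw [IsHyponormalOp, ← star_eq_adjoint, ← star_mul_self_le_star_mul_self_iff, star_star]

theorem isCoHyponormalOp_iff_le : IsCoHyponormalOp T ↔ star T * T ≤ T * star T := by
  rw [IsCoHyponormalOp, ← star_eq_adjoint, ← star_mul_self_le_star_mul_self_iff, star_star]

end

theorem normal_of_hyponormal_cohyponormal_general {H : Type*} [NormedAddCommGroup H]
    [InnerProductSpace ℂ H] [CompleteSpace H]
    (A B : H →L[ℂ] H) (hA : IsNormalOp A) (hAB : IsHyponormalOp (A * B))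
    (hBA : IsCoHyponormalOp (B * A))
    (h : A * adjoint A * B = B * (adjoint A * A)) :
    IsNormalOp (A * B) ∧ IsNormalOp (B * A) := by
  rw [isNormalOp_iff_isStarNormal_s7] at hA
  rw [isHyponormalOp_iff_le] at hAB
  rw [isCoHyponormalOp_iff_le] at hBA
  rw [← star_eq_adjoint] at h
  simpa only [isNormalOp_iff_isStarNormal_s7] using
    CStarAlgebra.isStarNormal_mul_and_mul_of_hyponormal hAB hBA h

/-- If `A` is normal, `AB` is hyponormal, `BA` is co-hyponormal and `A A* B = B A* A`,
then both `AB` and `BA` are normal. -/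
theorem normal_of_hyponormal_cohyponormal {H : Type*} [NormedAddCommGroup H]
    [InnerProductSpace ℂ H] [CompleteSpace H] [TopologicalSpace.SeparableSpace H]
    (A B : H →L[ℂ] H) (hA : IsNormalOp A) (hAB : IsHyponormalOp (A * B))
    (hBA : IsCoHyponormalOp (B * A))
    (h : A * adjoint A * B = B * (adjoint A * A)) :
    IsNormalOp (A * B) ∧ IsNormalOp (B * A) :=
  normal_of_hyponormal_cohyponormal_general A B hA hAB hBA h
end

section
/- Let A, B and C be (possibly unbounded) densely defined self-adjoint operators in a complex Hilbert space H. If A ⊆ BC (i.e., the composition BC, with domain {x ∈ D(C) : Cx ∈ D(B)}, extends A), then A = BC. -/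
noncomputable section

variable {H : Type*} [NormedAddCommGroup H] [InnerProductSpace ℂ H] [CompleteSpace H]

namespace LinearPMap

/-- The composition `S ∘ T` of two partially defined linear operators, with its natural
domain `{x ∈ D(T) : T x ∈ D(S)}`. -/
noncomputable def pcomp (S T : H →ₗ.[ℂ] H) : H →ₗ.[ℂ] H :=
  { domain := (S.domain.comap T.toFun).map T.domain.subtype
    toFun := (S.toFun.comp ((T.toFun.comp (S.domain.comap T.toFun).subtype).codRestrict
        S.domain fun x => x.2)).comp
      (Submodule.equivMapOfInjective T.domain.subtype Subtype.val_injective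
        (S.domain.comap T.toFun)).symm.toLinearMap }

/-- A bounded operator viewed as a partially defined operator with domain the
whole space. -/
noncomputable def ofCLM (A : H →L[ℂ] H) : H →ₗ.[ℂ] H :=
  A.toLinearMap.toPMap ⊤

/-- An unbounded densely defined operator is *normal* if it is closed and
`N N* = N* N` (including equality of the natural domains). -/
def IsNormalPMap (N : H →ₗ.[ℂ] H) : Prop :=
  Dense (N.domain : Set H) ∧ N.IsClosed ∧ N.pcomp N.adjoint = N.adjoint.pcomp N

end LinearPMap

open LinearPMap

/-!
Since `B` and `C` are symmetric, `CB` is a formal adjoint of `BC`, hence of `A ⊆ BC`, so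
`CB ⊆ A* = A`. If `(BC + i) z = 0`, then `w = C z` satisfies `CB w = -i w`, hence `A w = -i w`,
so `w = 0` and then `z = 0`: the operator `BC + i` is injective. Since `A` is self-adjoint,
`A + i` is surjective, and an injective operator has no proper restriction that is still
surjective.
-/

namespace LinearPMap

open Complex ComplexConjugate

section Maximality

variable {R M : Type*} [Ring R] [AddCommGroup M] [Module R M]

theorem eq_of_le_of_forall_exists_apply_add_smul_eq {S T : M →ₗ.[R] M} (c : R) (hST : S ≤ T)
    (hS : ∀ v, ∃ x : S.domain, S x + c • (x : M) = v)
    (hT : ∀ z : T.domain, T z + c • (z : M) = 0 → (z : M) = 0) : S = T := by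
  refine eq_of_le_of_domain_eq hST (le_antisymm hST.1 fun z hz => ?_)
  obtain ⟨x, hx⟩ := hS (T ⟨z, hz⟩ + c • z)
  have hTx : T ⟨x, hST.1 x.2⟩ = S x := (hST.2 rfl).symm
  have hzx : z - x = 0 := by
    refine hT (⟨z, hz⟩ - ⟨x, hST.1 x.2⟩) ?_
    rw [map_sub, hTx, Submodule.coe_sub, smul_sub, sub_add_sub_comm, hx, sub_self]
  exact sub_eq_zero.mp hzx ▸ x.2

end Maximality

section Symmetric

variable {𝕜 E : Type*} [RCLike 𝕜] [NormedAddCommGroup E] [InnerProductSpace 𝕜 E]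

theorem IsFormalAdjoint.eq_zero_of_apply_eq_smul {T : E →ₗ.[𝕜] E} (hT : T.IsFormalAdjoint T)
    {x : T.domain} {c : 𝕜} (hx : T x = c • (x : E)) (hc : conj c ≠ c) : (x : E) = 0 := by
  have h := hT x x
  rw [hx, inner_smul_left, inner_smul_right] at h
  have : (conj c - c) * inner 𝕜 (x : E) x = 0 := by linear_combination h
  exact inner_self_eq_zero.mp ((mul_eq_zero.mp this).resolve_left (sub_ne_zero.mpr hc))

theorem _root_.IsSelfAdjoint.isFormalAdjoint [CompleteSpace E] {T : E →ₗ.[𝕜] E}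
    (hT : IsSelfAdjoint T) : T.IsFormalAdjoint T := by
  have h := adjoint_isFormalAdjoint hT.dense_domain
  rwa [isSelfAdjoint_def.mp hT] at h

end Symmetric

variable {E : Type*} [NormedAddCommGroup E] [InnerProductSpace ℂ E]

theorem mem_pcomp_domain_iff {S T : E →ₗ.[ℂ] E} {x : E} :
    x ∈ (S.pcomp T).domain ↔ ∃ hx : x ∈ T.domain, T ⟨x, hx⟩ ∈ S.domain :=
  ⟨fun ⟨y, hy, hyx⟩ => hyx ▸ ⟨y.2, hy⟩, fun ⟨hx, hTx⟩ => ⟨⟨x, hx⟩, hTx, rfl⟩⟩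

theorem pcomp_apply {S T : E →ₗ.[ℂ] E} (x : (S.pcomp T).domain) (hx : (x : E) ∈ T.domain)
    (hTx : T ⟨x, hx⟩ ∈ S.domain) : S.pcomp T x = S ⟨T ⟨x, hx⟩, hTx⟩ := by
  let e := Submodule.equivMapOfInjective T.domain.subtype Subtype.val_injective
    (S.domain.comap T.toFun)
  have he : ((e.symm x : T.domain) : E) = x := congrArg Subtype.val (e.apply_symm_apply x)
  exact congrArg S.toFun (Subtype.ext (congrArg T.toFun (Subtype.ext he)))

theorem IsFormalAdjoint.pcomp {B B' C C' : E →ₗ.[ℂ] E} (hB : B.IsFormalAdjoint B')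
    (hC : C.IsFormalAdjoint C') : (B.pcomp C).IsFormalAdjoint (C'.pcomp B') := fun x y => by
  obtain ⟨hx, hCx⟩ := mem_pcomp_domain_iff.mp x.2
  obtain ⟨hy, hB'y⟩ := mem_pcomp_domain_iff.mp y.2
  rw [pcomp_apply x hx hCx, pcomp_apply y hy hB'y, hB ⟨_, hCx⟩ ⟨y, hy⟩, hC ⟨x, hx⟩ ⟨_, hB'y⟩]

theorem eq_zero_of_pcomp_apply_add_I_smul_eq_zero {A B C : E →ₗ.[ℂ] E}
    (hA : A.IsFormalAdjoint A) (hCB : C.pcomp B ≤ A) (z : (B.pcomp C).domain)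
    (hz : B.pcomp C z + I • (z : E) = 0) : (z : E) = 0 := by
  obtain ⟨hz₁, hz₂⟩ := mem_pcomp_domain_iff.mp z.2
  set w : B.domain := ⟨C ⟨z, hz₁⟩, hz₂⟩
  have hBw : B w = -I • (z : E) := by
    rw [← pcomp_apply z hz₁ hz₂, neg_smul]
    exact eq_neg_of_add_eq_zero_left hz
  have hBw' : B w ∈ C.domain := hBw ▸ C.domain.smul_mem _ hz₁
  have hw : (w : E) ∈ (C.pcomp B).domain := mem_pcomp_domain_iff.mpr ⟨w.2, hBw'⟩
  have hCBw : C.pcomp B ⟨w, hw⟩ = -I • (w : E) := by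
    rw [pcomp_apply _ w.2 hBw', ← C.map_smul]
    exact congrArg C (Subtype.ext hBw)
  have hAw : A ⟨w, hCB.1 hw⟩ = -I • (w : E) := (hCB.2 (x := ⟨w, hw⟩) rfl).symm.trans hCBw
  have hw₀ : (w : E) = 0 := hA.eq_zero_of_apply_eq_smul hAw
    (by rw [ne_eq, conj_eq_iff_im, neg_im, I_im]; exact neg_ne_zero.mpr one_ne_zero)
  have hBw₀ : B w = 0 := by rw [show w = 0 from Subtype.ext hw₀, B.map_zero]
  exact (smul_eq_zero.mp (hBw.symm.trans hBw₀)).resolve_left (neg_ne_zero.mpr I_ne_zero)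

theorem IsFormalAdjoint.norm_apply_add_I_smul_sq {T : E →ₗ.[ℂ] E} (hT : T.IsFormalAdjoint T)
    (x : T.domain) : ‖T x + I • (x : E)‖ ^ 2 = ‖T x‖ ^ 2 + ‖(x : E)‖ ^ 2 := by
  have hre : (inner ℂ (T x) (x : E) : ℂ).im = 0 :=
    conj_eq_iff_im.mp (by rw [inner_conj_symm, hT x x])
  rw [@norm_add_sq ℂ, inner_smul_right, norm_smul, norm_I, one_mul, RCLike.re_to_complex,
    mul_re, I_re, I_im, hre]
  ring

variable [CompleteSpace E]

theorem IsFormalAdjoint.isClosed_range_apply_add_I_smul {T : E →ₗ.[ℂ] E}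
    (hT : T.IsFormalAdjoint T) (hTc : T.IsClosed) :
    _root_.IsClosed (Set.range fun x : T.domain => T x + I • (x : E)) := by
  have : CompleteSpace T.graph := hTc.completeSpace_coe
  let g : T.graph →L[ℂ] E :=
    (ContinuousLinearMap.snd ℂ E E + I • ContinuousLinearMap.fst ℂ E E).comp T.graph.subtypeL
  have hg : AntilipschitzWith 1 g := g.antilipschitz_of_bound fun p => by
    obtain ⟨x, hx₁, hx₂⟩ := T.mem_graph_iff.mp p.2
    have hsq := hT.norm_apply_add_I_smul_sq x
    have hgp : g p = T x + I • (x : E) := by simp [g, hx₁, hx₂]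
    change ‖(p : E × E)‖ ≤ 1 * ‖g p‖
    rw [one_mul, hgp, Prod.norm_def, ← hx₁, ← hx₂]
    refine max_le ?_ ?_ <;>
      nlinarith [norm_nonneg (T x + I • (x : E)), norm_nonneg (T x), norm_nonneg (x : E)]
  have hrange : Set.range g = Set.range fun x : T.domain => T x + I • (x : E) := by
    ext v
    constructor
    · rintro ⟨p, rfl⟩
      obtain ⟨x, hx₁, hx₂⟩ := T.mem_graph_iff.mp p.2
      exact ⟨x, by simp [g, hx₁, hx₂]⟩
    · rintro ⟨x, rfl⟩
      exact ⟨⟨((x : E), T x), T.mem_graph x⟩, by simp [g]⟩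
  exact hrange ▸ hg.isClosed_range g.uniformContinuous

theorem _root_.IsSelfAdjoint.eq_zero_of_forall_inner_apply_add_I_smul_eq_zero
    {T : E →ₗ.[ℂ] E} (hT : IsSelfAdjoint T) {z : E}
    (hz : ∀ x : T.domain, inner ℂ (T x + I • (x : E)) z = 0) : z = 0 := by
  have hz' : ∀ x : T.domain, inner ℂ (I • z) (x : E) = inner ℂ z (T x) := fun x => by
    have hTx : inner ℂ (T x) z = I * inner ℂ (x : E) z := by
      have h := hz x
      rw [inner_add_left, inner_smul_left, conj_I] at h
      linear_combination h
    rw [inner_smul_left, ← inner_conj_symm z (T x), hTx, map_mul, inner_conj_symm]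
  have hzT : z ∈ T†.domain := mem_adjoint_domain_of_exists z ⟨I • z, hz'⟩
  have hTz : T† ⟨z, hzT⟩ = I • z := adjoint_apply_eq hT.dense_domain _ hz'
  have hsymm : T†.IsFormalAdjoint T† := by
    rw [isSelfAdjoint_def.mp hT]
    exact hT.isFormalAdjoint
  exact hsymm.eq_zero_of_apply_eq_smul hTz
    (by rw [ne_eq, conj_eq_iff_im, I_im]; exact one_ne_zero)

theorem _root_.IsSelfAdjoint.exists_apply_add_I_smul_eq {T : E →ₗ.[ℂ] E} (hT : IsSelfAdjoint T)
    (v : E) : ∃ x : T.domain, T x + I • (x : E) = v := by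
  let L : T.domain →ₗ[ℂ] E := T.toFun + I • T.domain.subtype
  have hclosed : _root_.IsClosed (LinearMap.range L : Set E) :=
    hT.isFormalAdjoint.isClosed_range_apply_add_I_smul hT.isClosed
  have hperp : (LinearMap.range L)ᗮ = ⊥ := (Submodule.eq_bot_iff _).mpr fun z hz =>
    hT.eq_zero_of_forall_inner_apply_add_I_smul_eq_zero fun x =>
      (Submodule.mem_orthogonal _ _).mp hz _ (LinearMap.mem_range_self L x)
  have htop : LinearMap.range L = ⊤ := by
    rw [← hclosed.submodule_topologicalClosure_eq, Submodule.topologicalClosure_eq_top_iff,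
      hperp]
  exact LinearMap.range_eq_top.mp htop v

theorem pcomp_le_of_le_pcomp {A B C : E →ₗ.[ℂ] E} (hA : IsSelfAdjoint A)
    (hB : B.IsFormalAdjoint B) (hC : C.IsFormalAdjoint C) (h : A ≤ B.pcomp C) :
    C.pcomp B ≤ A := by
  have hCB : A.IsFormalAdjoint (C.pcomp B) := fun x y => by
    rw [h.2 (y := ⟨x, h.1 x.2⟩) rfl]
    exact hB.pcomp hC _ y
  exact isSelfAdjoint_def.mp hA ▸ hCB.le_adjoint hA.dense_domain

end LinearPMap

theorem devinatz_nussbaum_von_neumann_general (A B C : H →ₗ.[ℂ] H)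
    (hA : A.adjoint = A) (hB : B.adjoint = B) (hC : C.adjoint = C)
    (h : A ≤ B.pcomp C) : A = B.pcomp C := by
  have hCB : C.pcomp B ≤ A :=
    pcomp_le_of_le_pcomp hA (IsSelfAdjoint.isFormalAdjoint hB)
      (IsSelfAdjoint.isFormalAdjoint hC) h
  exact eq_of_le_of_forall_exists_apply_add_smul_eq Complex.I h
    (IsSelfAdjoint.exists_apply_add_I_smul_eq hA)
    (eq_zero_of_pcomp_apply_add_I_smul_eq_zero (IsSelfAdjoint.isFormalAdjoint hA) hCB)

/-- **Devinatz–Nussbaum–von Neumann maximality theorem**: if `A`, `B`, `C` are densely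
defined self-adjoint operators and `BC` extends `A`, then `A = BC`. -/
theorem devinatz_nussbaum_von_neumann (A B C : H →ₗ.[ℂ] H)
    (hAdense : Dense (A.domain : Set H)) (hBdense : Dense (B.domain : Set H))
    (hCdense : Dense (C.domain : Set H))
    (hA : A.adjoint = A) (hB : B.adjoint = B) (hC : C.adjoint = C)
    (h : A ≤ B.pcomp C) : A = B.pcomp C :=
  devinatz_nussbaum_von_neumann_general A B C hA hB hC h
end
end
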